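/- arXiv:1905.04692 — 4 statements merged into one kernel-verified Lean document; each statement's English description precedes it below -/
import Mathlib

section
/- Let T = (i,i+1) be an adjacent transposition in S_N, let s, π ∈ S_N be arbitrary, and let t_1,…,t_n be adjacent transpositions with parameters x_1,…,x_n ∈ ℂ. Assume s(i) < s(i+1). Then the coefficients satisfy: f_n(sT → π) = f_n(s → πT) + (1−q) f_n(s → π) if π(i) > π(i+1), and f_n(sT → π) = q · f_n(s → πT) if π(i) < π(i+1). -/
private lemma adjSwapLt {N : ℕ} (i j : Fin N) (hij : (j:ℕ) = (i:ℕ) + 1) (m m' : Fin N)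
    (h1 : ¬(m = i ∧ m' = j)) (h2 : ¬(m = j ∧ m' = i)) :
    (Equiv.swap i j m < Equiv.swap i j m' ↔ m < m') := by
  simp only [Equiv.swap_apply_def]
  split_ifs <;> (simp only [Fin.lt_def, Fin.ext_iff, not_and] at *) <;> omega

private lemma swapMulEq {N : ℕ} (i j a b : Fin N) (s : Equiv.Perm (Fin N))
    (ha : s i = a) (hb : s j = b) : Equiv.swap a b * s = s * Equiv.swap i j := by
  subst ha hb
  ext k
  simp only [Equiv.Perm.mul_apply, Equiv.swap_apply_def, s.injective.eq_iff]
  split_ifs <;> simp_all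

/-- The coefficients `f_n(s → π)` defined by
`w_{t_n,x_n} ⋯ w_{t_1,x_1} s = ∑_π f_n(s → π) π`, where each operator
`w_{t,x}` with `t = (a,b)` (an adjacent transposition, `b = a+1`) acts on a
permutation `σ` by `w_{t,x}(σ) = (1-x)σ + x·tσ` if `σ⁻¹(a) < σ⁻¹(b)` and
`(1-qx)σ + qx·tσ` if `σ⁻¹(a) > σ⁻¹(b)`.  The list holds
`(t_1,x_1), …, (t_n,x_n)` with the first-applied operator at the head. -/
def fCoeff {N : ℕ} (q : ℂ) :
    List (Fin N × Fin N × ℂ) → Equiv.Perm (Fin N) → Equiv.Perm (Fin N) → ℂ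
  | [], s, π => if π = s then 1 else 0
  | (a, b, x) :: rest, s, π =>
      (1 - (if s⁻¹ a < s⁻¹ b then x else q * x)) * fCoeff q rest s π
        + (if s⁻¹ a < s⁻¹ b then x else q * x) * fCoeff q rest (Equiv.swap a b * s) π

/-- Proposition 2.1: with `T = (i,i+1)` and `s(i) < s(i+1)`,
`f_n(sT → π) = f_n(s → πT) + (1-q) f_n(s → π)` if `π(i) > π(i+1)`, and
`f_n(sT → π) = q f_n(s → πT)` if `π(i) < π(i+1)`. -/
theorem statement0 (N : ℕ) (q : ℂ) (n : ℕ)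
    (ops : List (Fin N × Fin N × ℂ)) (hlen : ops.length = n)
    (hadj : ∀ p ∈ ops, (p.2.1 : ℕ) = (p.1 : ℕ) + 1)
    (i j : Fin N) (hij : (j : ℕ) = (i : ℕ) + 1)
    (s π : Equiv.Perm (Fin N)) (hs : s i < s j) :
    (π j < π i →
      fCoeff q ops (s * Equiv.swap i j) π
        = fCoeff q ops s (π * Equiv.swap i j) + (1 - q) * fCoeff q ops s π) ∧
    (π i < π j →
      fCoeff q ops (s * Equiv.swap i j) π
        = q * fCoeff q ops s (π * Equiv.swap i j)) := by
  clear hlen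
  have hijne : i ≠ j := by intro h; rw [h] at hij; omega
  revert hadj hs
  induction ops generalizing s π with
  | nil =>
    intro _ hs
    constructor
    · intro hπ
      have hne : π ≠ s := by
        rintro rfl; exact absurd hs (not_lt.mpr hπ.le)
      simp only [fCoeff]
      by_cases h : π = s * Equiv.swap i j
      · have h2 : π * Equiv.swap i j = s := by
          rw [h, mul_assoc, Equiv.swap_mul_self, mul_one]
        simp [h, h2, hne, hijne]
      · have h2 : π * Equiv.swap i j ≠ s := by
          intro hh
          apply h
          rw [← hh, mul_assoc, Equiv.swap_mul_self, mul_one]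
        simp [h, h2, hne]
    · intro hπ
      have h1 : π ≠ s * Equiv.swap i j := by
        intro h
        have hi : π i = s j := by rw [h]; simp [Equiv.Perm.mul_apply]
        have hj : π j = s i := by rw [h]; simp [Equiv.Perm.mul_apply]
        rw [hi, hj] at hπ
        exact absurd hs (not_lt.mpr hπ.le)
      have h2 : π * Equiv.swap i j ≠ s := by
        intro hh
        apply h1
        rw [← hh, mul_assoc, Equiv.swap_mul_self, mul_one]
      simp [fCoeff, h1, h2]
  | cons hd tl ih =>
    intro hadj hs
    obtain ⟨a, b, x⟩ := hd
    have hab : (b : ℕ) = (a : ℕ) + 1 := hadj (a, b, x) List.mem_cons_self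
    have hadj' : ∀ p ∈ tl, (p.2.1 : ℕ) = (p.1 : ℕ) + 1 :=
      fun p hp => hadj p (List.mem_cons_of_mem _ hp)
    have hπTi : (π * Equiv.swap i j) i = π j := by
      simp [Equiv.Perm.mul_apply]
    have hπTj : (π * Equiv.swap i j) j = π i := by
      simp [Equiv.Perm.mul_apply]
    have hTT : π * Equiv.swap i j * Equiv.swap i j = π := by
      rw [mul_assoc, Equiv.swap_mul_self, mul_one]
    by_cases hB : s i = a ∧ s j = b
    · -- special case: {a,b} = {s i, s j}
      obtain ⟨ha, hb⟩ := hB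
      have hts : Equiv.swap a b * s = s * Equiv.swap i j := swapMulEq i j a b s ha hb
      have hsa : s⁻¹ a = i := by rw [← ha, Equiv.Perm.inv_def, Equiv.symm_apply_apply]
      have hsb : s⁻¹ b = j := by rw [← hb, Equiv.Perm.inv_def, Equiv.symm_apply_apply]
      have hci : s⁻¹ a < s⁻¹ b := by rw [hsa, hsb]; exact Fin.lt_def.mpr (by omega)
      have hja : (s * Equiv.swap i j) j = a := by
        simp [Equiv.Perm.mul_apply, ha]
      have hib : (s * Equiv.swap i j) i = b := by
        simp [Equiv.Perm.mul_apply, hb]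
      have hsa' : (s * Equiv.swap i j)⁻¹ a = j := by
        rw [← hja, Equiv.Perm.inv_def, Equiv.symm_apply_apply]
      have hsb' : (s * Equiv.swap i j)⁻¹ b = i := by
        rw [← hib, Equiv.Perm.inv_def, Equiv.symm_apply_apply]
      have hci' : ¬ (s * Equiv.swap i j)⁻¹ a < (s * Equiv.swap i j)⁻¹ b := by
        rw [hsa', hsb']
        intro h
        rw [Fin.lt_def] at h
        omega
      have hswap2 : Equiv.swap a b * (s * Equiv.swap i j) = s := by
        rw [← hts, ← mul_assoc, Equiv.swap_mul_self, one_mul]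
      constructor
      · intro hπ
        have E1 := (ih s π hadj' hs).1 hπ
        have E2 := (ih s (π * Equiv.swap i j) hadj' hs).2 (by rw [hπTi, hπTj]; exact hπ)
        rw [hTT] at E2
        simp only [fCoeff, if_pos hci, if_neg hci', hts, hswap2]
        rw [E1, E2]
        ring
      · intro hπ
        have E1 := (ih s π hadj' hs).2 hπ
        have E2 := (ih s (π * Equiv.swap i j) hadj' hs).1 (by rw [hπTi, hπTj]; exact hπ)
        rw [hTT] at E2
        simp only [fCoeff, if_pos hci, if_neg hci', hts, hswap2]
        rw [E1, E2]
        ring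
    · -- generic case
      have hB2 : ¬(s i = b ∧ s j = a) := by
        rintro ⟨h1, h2⟩
        rw [h1, h2, Fin.lt_def] at hs
        omega
      have hts : (Equiv.swap a b * s) i < (Equiv.swap a b * s) j := by
        simp only [Equiv.Perm.mul_apply]
        exact (adjSwapLt a b hab (s i) (s j) hB hB2).mpr hs
      have key : ∀ y, (s * Equiv.swap i j)⁻¹ y = Equiv.swap i j (s⁻¹ y) := by
        intro y
        rw [mul_inv_rev, Equiv.swap_inv, Equiv.Perm.mul_apply]
      have c1 : ¬(s⁻¹ a = i ∧ s⁻¹ b = j) := by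
        rintro ⟨h1, h2⟩
        exact hB ⟨by rw [← h1, Equiv.Perm.inv_def, Equiv.apply_symm_apply],
                  by rw [← h2, Equiv.Perm.inv_def, Equiv.apply_symm_apply]⟩
      have c2 : ¬(s⁻¹ a = j ∧ s⁻¹ b = i) := by
        rintro ⟨h1, h2⟩
        exact hB2 ⟨by rw [← h2, Equiv.Perm.inv_def, Equiv.apply_symm_apply],
                   by rw [← h1, Equiv.Perm.inv_def, Equiv.apply_symm_apply]⟩
      have hciff : ((s * Equiv.swap i j)⁻¹ a < (s * Equiv.swap i j)⁻¹ b) ↔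
          (s⁻¹ a < s⁻¹ b) := by
        rw [key a, key b]
        exact adjSwapLt i j hij _ _ c1 c2
      have hcif : (if (s * Equiv.swap i j)⁻¹ a < (s * Equiv.swap i j)⁻¹ b then x else q * x)
          = (if s⁻¹ a < s⁻¹ b then x else q * x) := if_congr hciff rfl rfl
      have hassoc : Equiv.swap a b * (s * Equiv.swap i j)
          = (Equiv.swap a b * s) * Equiv.swap i j := (mul_assoc _ _ _).symm
      constructor
      · intro hπ
        have E1 := (ih s π hadj' hs).1 hπ
        have E1' := (ih (Equiv.swap a b * s) π hadj' hts).1 hπ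
        simp only [fCoeff, hcif, hassoc]
        rw [E1, E1']
        ring
      · intro hπ
        have E1 := (ih s π hadj' hs).2 hπ
        have E1' := (ih (Equiv.swap a b * s) π hadj' hts).2 hπ
        simp only [fCoeff, hcif, hassoc]
        rw [E1, E1']
        ring
end

section
/- For any choice of adjacent transpositions t_1,…,t_n in S_N and parameters x_1,…,x_n ∈ ℂ, and for every π ∈ S_N, one has f_n(e → π) = f̃_n(e → π⁻¹), where e is the identity permutation. -/
/-- The mirror coefficients, corresponding to right multiplication in the
Hecke algebra: the condition is on values `u a < u b` and the successor
state is `u * swap a b`. -/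
def gCoeff {N : ℕ} (q : ℂ) :
    List (Fin N × Fin N × ℂ) → Equiv.Perm (Fin N) → Equiv.Perm (Fin N) → ℂ
  | [], u, π => if π = u then 1 else 0
  | (a, b, x) :: rest, u, π =>
      (1 - (if u a < u b then x else q * x)) * gCoeff q rest u π
        + (if u a < u b then x else q * x) * gCoeff q rest (u * Equiv.swap a b) π

lemma fCoeff_nil {N : ℕ} (q : ℂ) (s π : Equiv.Perm (Fin N)) :
    fCoeff q [] s π = if π = s then 1 else 0 := rfl

lemma fCoeff_cons {N : ℕ} (q : ℂ) (a b : Fin N) (x : ℂ)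
    (rest : List (Fin N × Fin N × ℂ)) (s π : Equiv.Perm (Fin N)) :
    fCoeff q ((a, b, x) :: rest) s π =
      (1 - (if s⁻¹ a < s⁻¹ b then x else q * x)) * fCoeff q rest s π
        + (if s⁻¹ a < s⁻¹ b then x else q * x) * fCoeff q rest (Equiv.swap a b * s) π := rfl

lemma gCoeff_nil {N : ℕ} (q : ℂ) (u π : Equiv.Perm (Fin N)) :
    gCoeff q [] u π = if π = u then 1 else 0 := rfl

lemma gCoeff_cons {N : ℕ} (q : ℂ) (a b : Fin N) (x : ℂ)
    (rest : List (Fin N × Fin N × ℂ)) (u π : Equiv.Perm (Fin N)) :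
    gCoeff q ((a, b, x) :: rest) u π =
      (1 - (if u a < u b then x else q * x)) * gCoeff q rest u π
        + (if u a < u b then x else q * x) * gCoeff q rest (u * Equiv.swap a b) π := rfl

/-- Claim A: the transpose relation `f_L(s → π) = g_L(s⁻¹ → π⁻¹)`. -/
lemma claimA {N : ℕ} (q : ℂ) (L : List (Fin N × Fin N × ℂ)) :
    ∀ s π : Equiv.Perm (Fin N), fCoeff q L s π = gCoeff q L s⁻¹ π⁻¹ := by
  induction L with
  | nil =>
    intro s π
    rw [fCoeff_nil, gCoeff_nil]
    simp [inv_inj]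
  | cons p L ih =>
    obtain ⟨a, b, x⟩ := p
    intro s π
    rw [fCoeff_cons, gCoeff_cons, ih s π, ih (Equiv.swap a b * s) π]
    have h : (Equiv.swap a b * s)⁻¹ = s⁻¹ * Equiv.swap a b := by
      rw [mul_inv_rev, Equiv.swap_inv]
    rw [h]

/-- Swapping two adjacent values preserves the order of a pair, unless the
pair is exactly that pair of adjacent values. -/
lemma swap_lt_iff {N : ℕ} {a b : Fin N} (hab : (b : ℕ) = (a : ℕ) + 1)
    {u v : Fin N} (huv : u ≠ v) (h1 : ¬(u = a ∧ v = b)) (h2 : ¬(u = b ∧ v = a)) :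
    (Equiv.swap a b u < Equiv.swap a b v ↔ u < v) := by
  rw [Equiv.swap_apply_def, Equiv.swap_apply_def]
  simp only [Fin.ext_iff, not_and, Fin.lt_def] at huv h1 h2 ⊢
  split_ifs <;> omega

lemma lt_of_adj {N : ℕ} {a b : Fin N} (hab : (b : ℕ) = (a : ℕ) + 1) : a < b := by
  simp [Fin.lt_def, hab]

lemma ne_of_adj {N : ℕ} {a b : Fin N} (hab : (b : ℕ) = (a : ℕ) + 1) : a ≠ b := by
  simp [Fin.ext_iff, hab]

/-- Append lemma for `gCoeff`. -/
lemma gAppend {N : ℕ} (q : ℂ) (a b : Fin N) (hab : (b : ℕ) = (a : ℕ) + 1) (x : ℂ)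
    (L : List (Fin N × Fin N × ℂ)) :
    ∀ u ρ : Equiv.Perm (Fin N),
      gCoeff q (L ++ [(a, b, x)]) u ρ =
        (if ρ a < ρ b then 1 - x else 1 - q * x) * gCoeff q L u ρ
          + (if ρ a < ρ b then q * x else x) * gCoeff q L u (ρ * Equiv.swap a b) := by
  induction L with
  | nil =>
    intro u ρ
    have hne : a ≠ b := ne_of_adj hab
    have huu : u * Equiv.swap a b ≠ u := by
      intro h
      have := congrArg (fun f : Equiv.Perm (Fin N) => f a) h
      simp at this
      exact hne this.symm
    rw [List.nil_append, gCoeff_cons]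
    simp only [gCoeff_nil]
    by_cases h1 : ρ = u
    · subst h1
      have h2 : ¬(ρ = ρ * Equiv.swap a b) := fun h => huu h.symm
      have h3 : ¬(ρ * Equiv.swap a b = ρ) := huu
      simp only [if_pos rfl, if_neg h2, if_neg h3]
      split_ifs <;> ring
    · by_cases h2 : ρ = u * Equiv.swap a b
      · have h3 : ρ * Equiv.swap a b = u := by
          rw [h2, mul_assoc, Equiv.swap_mul_self, mul_one]
        have hρa : ρ a = u b := by rw [h2]; simp
        have hρb : ρ b = u a := by rw [h2]; simp
        have hne2 : u a ≠ u b := fun h => hne (u.injective h)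
        simp only [if_pos h2, if_neg h1, if_pos h3, hρa, hρb]
        rcases hne2.lt_or_gt with h | h <;>
          simp only [if_pos h, if_neg (asymm h)] <;> ring
      · have h3 : ¬(ρ * Equiv.swap a b = u) := by
          intro h
          apply h2
          rw [← h, mul_assoc, Equiv.swap_mul_self, mul_one]
        simp only [if_neg h1, if_neg h2, if_neg h3]
        split_ifs <;> ring
  | cons p L ih =>
    intro u ρ
    obtain ⟨a', b', x'⟩ := p
    rw [List.cons_append, gCoeff_cons, gCoeff_cons, gCoeff_cons, ih u ρ,
      ih (u * Equiv.swap a' b') ρ]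
    ring

/-- The key lemma (right multiplication by `T_t` in the Hecke algebra):
for `s a < s b`, the coefficients started from `s * swap a b` are expressed
through those started from `s`. -/
lemma lemD {N : ℕ} (q : ℂ) (L : List (Fin N × Fin N × ℂ))
    (hadj : ∀ p ∈ L, (p.2.1 : ℕ) = (p.1 : ℕ) + 1) (a b : Fin N)
    (hab : (b : ℕ) = (a : ℕ) + 1) :
    ∀ s ρ : Equiv.Perm (Fin N), s a < s b →
      fCoeff q L (s * Equiv.swap a b) ρ =
        if ρ a < ρ b then q * fCoeff q L s (ρ * Equiv.swap a b)
        else fCoeff q L s (ρ * Equiv.swap a b) + (1 - q) * fCoeff q L s ρ := by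
  have hne : a ≠ b := ne_of_adj hab
  induction L with
  | nil =>
    intro s ρ hs
    have key : ρ = s * Equiv.swap a b ↔ ρ * Equiv.swap a b = s := by
      constructor
      · intro h; rw [h, mul_assoc, Equiv.swap_mul_self, mul_one]
      · intro h; rw [← h, mul_assoc, Equiv.swap_mul_self, mul_one]
    rw [fCoeff_nil, fCoeff_nil, fCoeff_nil]
    by_cases h1 : ρ = s * Equiv.swap a b
    · have hρa : ρ a = s b := by rw [h1]; simp
      have hρb : ρ b = s a := by rw [h1]; simp
      have hcond : ¬(ρ a < ρ b) := by rw [hρa, hρb]; exact asymm hs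
      have h2 : ρ ≠ s := by
        intro h
        rw [h] at hρa
        exact hne (s.injective hρa)
      rw [if_pos h1, if_neg hcond, if_pos (key.mp h1), if_neg h2]
      ring
    · rw [if_neg h1, if_neg (fun h => h1 (key.mpr h))]
      by_cases h2 : ρ = s
      · subst h2
        rw [if_pos rfl, if_pos hs]
        ring
      · rw [if_neg h2]
        split_ifs <;> ring
  | cons p L ih =>
    obtain ⟨a', b', x'⟩ := p
    have hab' : (b' : ℕ) = (a' : ℕ) + 1 := hadj _ List.mem_cons_self
    have hadjL : ∀ p ∈ L, (p.2.1 : ℕ) = (p.1 : ℕ) + 1 :=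
      fun p hp => hadj p (List.mem_cons_of_mem _ hp)
    have hne' : a' ≠ b' := ne_of_adj hab'
    have ha'b' : a' < b' := lt_of_adj hab'
    have IH := ih hadjL
    intro s ρ hs
    have hρab : ρ a ≠ ρ b := fun h => hne (ρ.injective h)
    have hinv : (s * Equiv.swap a b)⁻¹ = Equiv.swap a b * s⁻¹ := by
      rw [mul_inv_rev, Equiv.swap_inv]
    have e1 : (ρ * Equiv.swap a b) * Equiv.swap a b = ρ := by
      rw [mul_assoc, Equiv.swap_mul_self, mul_one]
    have e2 : (ρ * Equiv.swap a b) a = ρ b := by simp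
    have e3 : (ρ * Equiv.swap a b) b = ρ a := by simp
    rw [fCoeff_cons, fCoeff_cons, fCoeff_cons]
    by_cases hc : s a = a' ∧ s b = b'
    · -- the interacting case: swap a' b' * s = s * swap a b
      obtain ⟨hc1, hc2⟩ := hc
      have hkey : Equiv.swap a' b' * s = s * Equiv.swap a b := by
        rw [← hc1, ← hc2, Equiv.swap_apply_apply]
        group
      have hsa : s⁻¹ a' = a := by rw [← hc1]; simp
      have hsb : s⁻¹ b' = b := by rw [← hc2]; simp
      have hcond0 : s⁻¹ a' < s⁻¹ b' := by rw [hsa, hsb]; exact lt_of_adj hab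
      have hcond1 : ¬((s * Equiv.swap a b)⁻¹ a' < (s * Equiv.swap a b)⁻¹ b') := by
        rw [hinv]
        simp only [Equiv.Perm.mul_apply, hsa, hsb, Equiv.swap_apply_left,
          Equiv.swap_apply_right]
        exact asymm (lt_of_adj hab)
      have hsucc : Equiv.swap a' b' * (s * Equiv.swap a b) = s := by
        rw [← mul_assoc, hkey, mul_assoc, Equiv.swap_mul_self, mul_one]
      rw [if_pos hcond0, if_neg hcond1, hsucc, hkey,
        IH s ρ hs, IH s (ρ * Equiv.swap a b) hs, e1, e2, e3]
      rcases hρab.lt_or_gt with h | h <;>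
        simp only [if_pos h, if_neg (asymm h)] <;> ring
    · -- the non-interacting case
      have hI1 : ¬(s⁻¹ a' = a ∧ s⁻¹ b' = b) := by
        rintro ⟨h1, h2⟩
        exact hc ⟨by rw [← h1]; simp, by rw [← h2]; simp⟩
      have hI2 : ¬(s⁻¹ a' = b ∧ s⁻¹ b' = a) := by
        rintro ⟨h1, h2⟩
        have hsb : s b = a' := by rw [← h1]; simp
        have hsa : s a = b' := by rw [← h2]; simp
        rw [hsa, hsb] at hs
        exact asymm ha'b' hs
      have huv : s⁻¹ a' ≠ s⁻¹ b' := fun h => hne' (s⁻¹.injective h)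
      have hcond : ((s * Equiv.swap a b)⁻¹ a' < (s * Equiv.swap a b)⁻¹ b')
          ↔ (s⁻¹ a' < s⁻¹ b') := by
        rw [hinv]
        simp only [Equiv.Perm.mul_apply]
        exact swap_lt_iff hab huv hI1 hI2
      have hts : (Equiv.swap a' b' * s) a < (Equiv.swap a' b' * s) b := by
        simp only [Equiv.Perm.mul_apply]
        rw [swap_lt_iff hab' hs.ne hc ?_]
        · exact hs
        · rintro ⟨h1, h2⟩
          rw [h1, h2] at hs
          exact asymm ha'b' hs
      have hassoc : Equiv.swap a' b' * (s * Equiv.swap a b)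
          = (Equiv.swap a' b' * s) * Equiv.swap a b := by rw [mul_assoc]
      simp only [hcond]
      rw [hassoc, IH s ρ hs, IH (Equiv.swap a' b' * s) ρ hts]
      split_ifs <;> ring

/-- Claim B: starting from the identity, `gCoeff` of a list equals `fCoeff`
of the reversed list. -/
lemma claimB {N : ℕ} (q : ℂ) (L : List (Fin N × Fin N × ℂ))
    (hadj : ∀ p ∈ L, (p.2.1 : ℕ) = (p.1 : ℕ) + 1) :
    ∀ ρ : Equiv.Perm (Fin N), gCoeff q L 1 ρ = fCoeff q L.reverse 1 ρ := by
  induction L using List.reverseRecOn with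
  | nil => intro ρ; rfl
  | append_singleton M p ih =>
    obtain ⟨a, b, x⟩ := p
    have hab : (b : ℕ) = (a : ℕ) + 1 := hadj (a, b, x) (by simp)
    have hadjM : ∀ p ∈ M, (p.2.1 : ℕ) = (p.1 : ℕ) + 1 :=
      fun p hp => hadj p (by simp [hp])
    have hadjMr : ∀ p ∈ M.reverse, (p.2.1 : ℕ) = (p.1 : ℕ) + 1 :=
      fun p hp => hadjM p (List.mem_reverse.mp hp)
    intro ρ
    have hD := lemD q M.reverse hadjMr a b hab 1 ρ (by
      simp only [Equiv.Perm.coe_one, id_eq]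
      exact lt_of_adj hab)
    rw [one_mul] at hD
    have hrev : (M ++ [(a, b, x)]).reverse = (a, b, x) :: M.reverse := by
      simp
    rw [gAppend q a b hab x M 1 ρ, ih hadjM ρ, ih hadjM (ρ * Equiv.swap a b),
      hrev, fCoeff_cons]
    have hone : ((1 : Equiv.Perm (Fin N))⁻¹ a < (1 : Equiv.Perm (Fin N))⁻¹ b) := by
      simp only [inv_one, Equiv.Perm.coe_one, id_eq]
      exact lt_of_adj hab
    rw [if_pos hone, mul_one, hD]
    split_ifs <;> ring

/-- Theorem 2.2 (color-position symmetry for permutations):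
`f_n(e → π) = f̃_n(e → π⁻¹)`. -/
theorem statement1 (N : ℕ) (q : ℂ) (n : ℕ)
    (ops : List (Fin N × Fin N × ℂ)) (hlen : ops.length = n)
    (hadj : ∀ p ∈ ops, (p.2.1 : ℕ) = (p.1 : ℕ) + 1)
    (π : Equiv.Perm (Fin N)) :
    fCoeff q ops 1 π = fCoeff q ops.reverse 1 π⁻¹ := by
  have h1 := claimA q ops 1 π
  rw [inv_one] at h1
  rw [h1, claimB q ops hadj π⁻¹]
end

section
/- Let t_1,…,t_{n+1} be adjacent transpositions in S_N with parameters x_1,…,x_{n+1} ∈ ℂ, write t_{n+1} = (A,A+1) and x = x_{n+1}. Then for every π ∈ S_N: f̃_{n+1}(e → π⁻¹) = (1−x) f̃_n(e → π⁻¹) + qx f̃_n(e → π⁻¹(A,A+1)) if π⁻¹(A) < π⁻¹(A+1), and f̃_{n+1}(e → π⁻¹) = (1−qx) f̃_n(e → π⁻¹) + x f̃_n(e → π⁻¹(A,A+1)) if π⁻¹(A) > π⁻¹(A+1). Here f̃_{n+1} is defined via the product w_{t_1,x_1}⋯w_{t_{n+1},x_{n+1}}, f̃_n via w_{t_1,x_1}⋯w_{t_n,x_n},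 e is the identity, and π⁻¹(A,A+1) denotes the composition of π⁻¹ with the transposition (A,A+1) on the right. -/

lemma swap_lt_iff_s3 {N : ℕ} (A B : Fin N) (hAB : (B : ℕ) = (A : ℕ) + 1)
    (p r : Fin N) (h1 : ¬(p = A ∧ r = B)) (h2 : ¬(p = B ∧ r = A)) :
    (Equiv.swap A B p < Equiv.swap A B r ↔ p < r) := by
  simp only [Equiv.swap_apply_def, Fin.ext_iff, Fin.lt_def, not_and] at h1 h2 ⊢
  split_ifs <;> omega

lemma fCoeff_snoc {N : ℕ} (q : ℂ) (a b : Fin N) (y : ℂ) :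
    ∀ (L : List (Fin N × Fin N × ℂ)) (s π : Equiv.Perm (Fin N)),
    fCoeff q (L ++ [(a, b, y)]) s π
      = (1 - if π⁻¹ a < π⁻¹ b then y else q * y) * fCoeff q L s π
        + (if π⁻¹ b < π⁻¹ a then y else q * y) * fCoeff q L s (Equiv.swap a b * π) := by
  intro L
  induction L with
  | nil =>
    intro s π
    simp only [List.nil_append, fCoeff]
    by_cases hab : a = b
    · subst hab
      simp [Equiv.swap_self, lt_irrefl, Equiv.Perm.refl_mul]
    · by_cases hps : π = s
      · subst hps
        have hne : ¬ Equiv.swap a b * π = π := by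
          intro e
          exact hab (Equiv.swap_eq_one_iff.mp (mul_right_cancel (e.trans (one_mul π).symm)))
        have hne' : ¬ π = Equiv.swap a b * π := fun e => hne e.symm
        simp [hne, hne']
      · by_cases hps2 : Equiv.swap a b * π = s
        · subst hps2
          have h1 : π = Equiv.swap a b * (Equiv.swap a b * π) := by
            rw [Equiv.swap_mul_self_mul]
          have conds : (Equiv.swap a b * π)⁻¹ a = π⁻¹ b ∧ (Equiv.swap a b * π)⁻¹ b = π⁻¹ a := by
            constructor <;>
              simp [mul_inv_rev, Equiv.swap_inv, Equiv.Perm.mul_apply]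
          rw [if_neg hps, ← h1, if_pos rfl, conds.1, conds.2]
          simp
        · have hps3 : ¬ π = Equiv.swap a b * s := by
            intro e
            exact hps2 (by rw [e, Equiv.swap_mul_self_mul])
          simp [hps, hps2, hps3]
  | cons p L ih =>
    obtain ⟨c, d, z⟩ := p
    intro s π
    simp only [List.cons_append, fCoeff, List.append_eq, ih]
    ring

lemma keyK {N : ℕ} (q : ℂ) (A B : Fin N) (hAB : (B : ℕ) = (A : ℕ) + 1) :
    ∀ (L : List (Fin N × Fin N × ℂ)), (∀ p ∈ L, (p.2.1 : ℕ) = (p.1 : ℕ) + 1) →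
    ∀ (σ : Equiv.Perm (Fin N)),
      (σ A < σ B →
        fCoeff q L (Equiv.swap A B) σ = q * fCoeff q L 1 (σ * Equiv.swap A B)) ∧
      (σ B < σ A →
        fCoeff q L (Equiv.swap A B) σ
          = (1 - q) * fCoeff q L 1 σ + fCoeff q L 1 (σ * Equiv.swap A B)) := by
  have hABlt : A < B := by rw [Fin.lt_def]; omega
  have nBA : ¬ B < A := lt_asymm hABlt
  intro L
  induction L using List.reverseRecOn with
  | nil =>
    intro _ σ
    constructor
    · intro h
      have h1 : ¬ σ = Equiv.swap A B := by
        rintro rfl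
        simp only [Equiv.swap_apply_left, Equiv.swap_apply_right] at h
        exact nBA h
      have h2 : ¬ σ * Equiv.swap A B = 1 := by
        rw [mul_eq_one_iff_eq_inv, Equiv.swap_inv]; exact h1
      simp [fCoeff, h1, h2]
    · intro h
      have h0 : ¬ σ = 1 := by
        rintro rfl
        simp only [Equiv.Perm.one_apply] at h
        exact nBA h
      have hiff : σ * Equiv.swap A B = 1 ↔ σ = Equiv.swap A B := by
        rw [mul_eq_one_iff_eq_inv, Equiv.swap_inv]
      simp only [fCoeff, h0, hiff, if_false]
      ring
  | append_singleton L p IH =>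
    obtain ⟨a, b, y⟩ := p
    intro hadj σ
    have hb : (b : ℕ) = (a : ℕ) + 1 := hadj (a, b, y) (by simp)
    have hab : a < b := by rw [Fin.lt_def]; omega
    have hL : ∀ p ∈ L, (p.2.1 : ℕ) = (p.1 : ℕ) + 1 := fun p hp => hadj p (by simp [hp])
    have IH' := IH hL
    have einv : (σ * Equiv.swap A B)⁻¹ = Equiv.swap A B * σ⁻¹ := by
      rw [mul_inv_rev, Equiv.swap_inv]
    have htt : σ * Equiv.swap A B * Equiv.swap A B = σ := by
      rw [mul_assoc, Equiv.swap_mul_self, mul_one]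
    constructor
    · intro h
      simp only [fCoeff_snoc, einv, Equiv.Perm.mul_apply, ← mul_assoc]
      by_cases hc1 : σ A = a ∧ σ B = b
      · obtain ⟨e1, e2⟩ := hc1
        have ia : σ⁻¹ a = A := by rw [← e1, Equiv.Perm.inv_def, Equiv.symm_apply_apply]
        have ib : σ⁻¹ b = B := by rw [← e2, Equiv.Perm.inv_def, Equiv.symm_apply_apply]
        have hts : Equiv.swap a b * σ = σ * Equiv.swap A B := by
          rw [Equiv.mul_swap_eq_swap_mul, e1, e2]
        have cond2 : (σ * Equiv.swap A B) B < (σ * Equiv.swap A B) A := by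
          simp only [Equiv.Perm.mul_apply, Equiv.swap_apply_left,
            Equiv.swap_apply_right, e1, e2]
          exact hab
        have k1 := (IH' σ).1 h
        have k2 := (IH' (σ * Equiv.swap A B)).2 cond2
        rw [htt] at k2
        rw [ia, ib, hts]
        simp only [Equiv.swap_apply_left, Equiv.swap_apply_right, hABlt, nBA,
          if_true, if_false]
        rw [k1, k2, htt]
        ring
      · by_cases hc2 : σ A = b ∧ σ B = a
        · exfalso
          rw [hc2.1, hc2.2, Fin.lt_def] at h
          omega
        · have E1 : ¬(σ⁻¹ a = A ∧ σ⁻¹ b = B) := fun ⟨u, v⟩ =>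
            hc1 ⟨by rw [← u, Equiv.Perm.inv_def, Equiv.apply_symm_apply],
                 by rw [← v, Equiv.Perm.inv_def, Equiv.apply_symm_apply]⟩
          have E2 : ¬(σ⁻¹ a = B ∧ σ⁻¹ b = A) := fun ⟨u, v⟩ =>
            hc2 ⟨by rw [← v, Equiv.Perm.inv_def, Equiv.apply_symm_apply],
                 by rw [← u, Equiv.Perm.inv_def, Equiv.apply_symm_apply]⟩
          have C1 := swap_lt_iff_s3 A B hAB (σ⁻¹ a) (σ⁻¹ b) E1 E2
          have C2 := swap_lt_iff_s3 A B hAB (σ⁻¹ b) (σ⁻¹ a)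
            (fun ⟨u, v⟩ => E2 ⟨v, u⟩) (fun ⟨u, v⟩ => E1 ⟨v, u⟩)
          have cond2 : (Equiv.swap a b * σ) A < (Equiv.swap a b * σ) B := by
            simp only [Equiv.Perm.mul_apply]
            exact (swap_lt_iff_s3 a b hb (σ A) (σ B) hc1 hc2).mpr h
          have k1 := (IH' σ).1 h
          have k2 := (IH' (Equiv.swap a b * σ)).1 cond2
          simp only [C1, C2]; rw [k1, k2]
          ring
    · intro h
      simp only [fCoeff_snoc, einv, Equiv.Perm.mul_apply, ← mul_assoc]
      by_cases hc1 : σ A = a ∧ σ B = b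
      · exfalso
        rw [hc1.1, hc1.2, Fin.lt_def] at h
        omega
      · by_cases hc2 : σ A = b ∧ σ B = a
        · obtain ⟨e1, e2⟩ := hc2
          have ia : σ⁻¹ a = B := by rw [← e2, Equiv.Perm.inv_def, Equiv.symm_apply_apply]
          have ib : σ⁻¹ b = A := by rw [← e1, Equiv.Perm.inv_def, Equiv.symm_apply_apply]
          have hts : Equiv.swap a b * σ = σ * Equiv.swap A B := by
            rw [Equiv.mul_swap_eq_swap_mul, e1, e2, Equiv.swap_comm]
          have cond2 : (σ * Equiv.swap A B) A < (σ * Equiv.swap A B) B := by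
            simp only [Equiv.Perm.mul_apply, Equiv.swap_apply_left,
              Equiv.swap_apply_right, e1, e2]
            exact hab
          have k1 := (IH' σ).2 h
          have k2 := (IH' (σ * Equiv.swap A B)).1 cond2
          rw [htt] at k2
          rw [ia, ib, hts]
          simp only [Equiv.swap_apply_left, Equiv.swap_apply_right, hABlt, nBA,
            if_true, if_false]
          rw [k1, k2, htt]
          ring
        · have E1 : ¬(σ⁻¹ a = A ∧ σ⁻¹ b = B) := fun ⟨u, v⟩ =>
            hc1 ⟨by rw [← u, Equiv.Perm.inv_def, Equiv.apply_symm_apply],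
                 by rw [← v, Equiv.Perm.inv_def, Equiv.apply_symm_apply]⟩
          have E2 : ¬(σ⁻¹ a = B ∧ σ⁻¹ b = A) := fun ⟨u, v⟩ =>
            hc2 ⟨by rw [← v, Equiv.Perm.inv_def, Equiv.apply_symm_apply],
                 by rw [← u, Equiv.Perm.inv_def, Equiv.apply_symm_apply]⟩
          have C1 := swap_lt_iff_s3 A B hAB (σ⁻¹ a) (σ⁻¹ b) E1 E2
          have C2 := swap_lt_iff_s3 A B hAB (σ⁻¹ b) (σ⁻¹ a)
            (fun ⟨u, v⟩ => E2 ⟨v, u⟩) (fun ⟨u, v⟩ => E1 ⟨v, u⟩)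
          have cond2 : (Equiv.swap a b * σ) B < (Equiv.swap a b * σ) A := by
            simp only [Equiv.Perm.mul_apply]
            exact (swap_lt_iff_s3 a b hb (σ B) (σ A)
              (fun ⟨u, v⟩ => hc2 ⟨v, u⟩) (fun ⟨u, v⟩ => hc1 ⟨v, u⟩)).mpr h
          have k1 := (IH' σ).2 h
          have k2 := (IH' (Equiv.swap a b * σ)).2 cond2
          simp only [C1, C2]; rw [k1, k2]
          ring

/-- Recursion (2.8) for the reversed coefficients: with `t_{n+1} = (A,A+1)`,
`x = x_{n+1}`, and `f̃` defined by applying the operators in the opposite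
order (so `f̃_n(s→π)` is `fCoeff q ops.reverse s π` and `f̃_{n+1}` prepends
`t_{n+1}` as the first-applied operator):
`f̃_{n+1}(e → π⁻¹) = (1-x) f̃_n(e → π⁻¹) + qx f̃_n(e → π⁻¹(A,A+1))` if
`π⁻¹(A) < π⁻¹(A+1)`, and
`f̃_{n+1}(e → π⁻¹) = (1-qx) f̃_n(e → π⁻¹) + x f̃_n(e → π⁻¹(A,A+1))` if
`π⁻¹(A) > π⁻¹(A+1)`. -/
theorem statement3 (N : ℕ) (q : ℂ) (n : ℕ)
    (ops : List (Fin N × Fin N × ℂ)) (hlen : ops.length = n)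
    (hadj : ∀ p ∈ ops, (p.2.1 : ℕ) = (p.1 : ℕ) + 1)
    (A B : Fin N) (hAB : (B : ℕ) = (A : ℕ) + 1) (x : ℂ)
    (π : Equiv.Perm (Fin N)) :
    (π⁻¹ A < π⁻¹ B →
      fCoeff q ((A, B, x) :: ops.reverse) 1 π⁻¹
        = (1 - x) * fCoeff q ops.reverse 1 π⁻¹
          + q * x * fCoeff q ops.reverse 1 (π⁻¹ * Equiv.swap A B)) ∧
    (π⁻¹ B < π⁻¹ A →
      fCoeff q ((A, B, x) :: ops.reverse) 1 π⁻¹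
        = (1 - q * x) * fCoeff q ops.reverse 1 π⁻¹
          + x * fCoeff q ops.reverse 1 (π⁻¹ * Equiv.swap A B)) := by
  have hABlt : A < B := by rw [Fin.lt_def]; omega
  have hadj' : ∀ p ∈ ops.reverse, (p.2.1 : ℕ) = (p.1 : ℕ) + 1 := fun p hp =>
    hadj p (List.mem_reverse.mp hp)
  have K := keyK q A B hAB ops.reverse hadj' π⁻¹
  have hhead : fCoeff q ((A, B, x) :: ops.reverse) 1 π⁻¹
      = (1 - x) * fCoeff q ops.reverse 1 π⁻¹
        + x * fCoeff q ops.reverse (Equiv.swap A B) π⁻¹ := by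
    simp [fCoeff, hABlt]
  constructor
  · intro h
    rw [hhead, K.1 h]
    ring
  · intro h
    rw [hhead, K.2 h]
    ring
end

section
/- Fix q ∈ [0,1], sites z_1,…,z_k ∈ ℤ and parameters x_1,…,x_k ∈ [0,1]. Let H_k be the random finitely-supported bijection of ℤ obtained by starting from the identity (the packed initial configuration where position z carries color z) and applying the random asymmetric swaps W_{(z_1,z_1+1),x_1}, W_{(z_2,z_2+1),x_2}, …, W_{(z_k,z_k+1),x_k} in this order. Let H̃_k be the random bijection obtained by starting from the identity and applying the same swaps in the opposite order W_{(z_k,z_k+1),x_k}, …, W_{(z_1,z_1+1),x_1}. Then H_k has the same probability distribution as the inverse bijection H̃_k⁻¹. (Equivalently, the position-to-color permutation of the forward process has the same law as the color-to-position permutation of the reversed process.) -/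
open scoped ENNReal

/-- One random asymmetric swap `W_{(z,z+1),x}` applied to a colored
configuration `η : ℤ ≃ ℤ` (position `z` carries color `η z`): the particles at
positions `z` and `z+1` are exchanged with probability `x` if
`η z < η (z+1)` and with probability `q·x` if `η z > η (z+1)`. -/
noncomputable def swapStep (q : ℝ≥0∞) (hq : q ≤ 1) (z : ℤ)
    (x : ℝ≥0∞) (hx : x ≤ 1) (η : Equiv.Perm ℤ) : PMF (Equiv.Perm ℤ) :=
  (PMF.bernoulli (if η z < η (z + 1) then x else q * x).toNNReal
      (by
        have h : (if η z < η (z + 1) then x else q * x) ≤ 1 := by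
          split_ifs
          · exact hx
          · exact le_trans (mul_le_mul' hq hx) (by simp)
        exact (ENNReal.toNNReal_mono ENNReal.one_ne_top h).trans_eq ENNReal.toNNReal_one)).bind
    fun b => PMF.pure (if b then η * Equiv.swap z (z + 1) else η)

/-- Apply the asymmetric swaps `W_{(z_1,z_1+1),x_1}, …, W_{(z_k,z_k+1),x_k}`
(in this order, head of the list first, with independent randomness) to the
configuration `η`. -/
noncomputable def runSwaps (q : ℝ≥0∞) (hq : q ≤ 1) :
    List (ℤ × {x : ℝ≥0∞ // x ≤ 1}) → Equiv.Perm ℤ → PMF (Equiv.Perm ℤ)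
  | [], η => PMF.pure η
  | (z, x) :: rest, η => (swapStep q hq z x.1 x.2 η).bind (runSwaps q hq rest)

attribute [local instance] Classical.propDecidable


-- arithmetic helpers
lemma split_one (u s : ℝ≥0∞) (hs : s ≤ 1) : u * (1 - s) + u * s = u := by
  rw [← mul_add, tsub_add_cancel_of_le hs, mul_one]

lemma split_one' (u s : ℝ≥0∞) (hs : s ≤ 1) : (1 - s) * u + s * u = u := by
  rw [← add_mul, tsub_add_cancel_of_le hs, one_mul]

lemma addcancel {A B C : ℝ≥0∞} (hC : C ≠ ∞) (h : A + C = B + C) : A = B :=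
  (ENNReal.add_left_inj hC).1 h

lemma key1 (q a b : ℝ≥0∞) (hq : q ≤ 1) (ha : a ≤ 1) (hb : b ≤ 1) :
    a * (1 - q * b) + (1 - a) * b = b * (1 - q * a) + (1 - b) * a := by
  have hqb : q * b ≤ 1 := le_trans (mul_le_mul' hq hb) (by simp)
  have hqa : q * a ≤ 1 := le_trans (mul_le_mul' hq ha) (by simp)
  apply addcancel (C := a * (q * b) + a * b)
  · have hle : a * (q * b) + a * b ≤ 1 + 1 :=
      add_le_add (by simpa using mul_le_mul' ha hqb) (by simpa using mul_le_mul' ha hb)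
    exact (lt_of_le_of_lt hle (by norm_num)).ne
  · calc a * (1 - q * b) + (1 - a) * b + (a * (q * b) + a * b)
        = (a * (1 - q * b) + a * (q * b)) + ((1 - a) * b + a * b) := by ring
      _ = a + b := by rw [split_one a (q*b) hqb, split_one' b a ha]
      _ = (b * (1 - q * a) + b * (q * a)) + ((1 - b) * a + b * a) := by
          rw [split_one b (q*a) hqa, split_one' a b hb, add_comm]
      _ = b * (1 - q * a) + (1 - b) * a + (a * (q * b) + a * b) := by ring

lemma key2 (q a b : ℝ≥0∞) (hq : q ≤ 1) (ha : a ≤ 1) (hb : b ≤ 1) :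
    (q * a) * (1 - b) + (1 - q * a) * (q * b) = (q * b) * (1 - a) + (1 - q * b) * (q * a) := by
  have hqb : q * b ≤ 1 := le_trans (mul_le_mul' hq hb) (by simp)
  have hqa : q * a ≤ 1 := le_trans (mul_le_mul' hq ha) (by simp)
  apply addcancel (C := (q * a) * b + (q * a) * (q * b))
  · have hle : (q * a) * b + (q * a) * (q * b) ≤ 1 + 1 :=
      add_le_add (by simpa using mul_le_mul' hqa hb) (by simpa using mul_le_mul' hqa hqb)
    exact (lt_of_le_of_lt hle (by norm_num)).ne
  · calc (q*a) * (1 - b) + (1 - q*a) * (q*b) + ((q*a) * b + (q*a) * (q*b))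
        = ((q*a) * (1 - b) + (q*a) * b) + ((1 - q*a) * (q*b) + (q*a) * (q*b)) := by ring
      _ = q*a + q*b := by rw [split_one (q*a) b hb, split_one' (q*b) (q*a) hqa]
      _ = ((q*b) * (1 - a) + (q*b) * a) + ((1 - q*b) * (q*a) + (q*b) * (q*a)) := by
          rw [split_one (q*b) a ha, split_one' (q*a) (q*b) hqb, add_comm]
      _ = (q*b) * (1 - a) + (1 - q*b) * (q*a) + ((q*a) * b + (q*a) * (q*b)) := by ring

lemma swap_lt_swap_iff (w a b : ℤ) (hne : a ≠ b)
    (h1 : ¬(a = w ∧ b = w + 1)) (h2 : ¬(a = w + 1 ∧ b = w)) :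
    Equiv.swap w (w+1) a < Equiv.swap w (w+1) b ↔ a < b := by
  simp only [Equiv.swap_apply_def]
  split_ifs <;> omega

/-- The "left" version: multiply by the swap on the left, with rate read off
from the inverse permutation. -/
noncomputable def swapStepL (q : ℝ≥0∞) (hq : q ≤ 1) (z : ℤ)
    (x : ℝ≥0∞) (hx : x ≤ 1) (η : Equiv.Perm ℤ) : PMF (Equiv.Perm ℤ) :=
  (PMF.bernoulli (if η⁻¹ z < η⁻¹ (z + 1) then x else q * x).toNNReal
      (by
        have h : (if η⁻¹ z < η⁻¹ (z + 1) then x else q * x) ≤ 1 := by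
          split_ifs
          · exact hx
          · exact le_trans (mul_le_mul' hq hx) (by simp)
        exact (ENNReal.toNNReal_mono ENNReal.one_ne_top h).trans_eq ENNReal.toNNReal_one)).bind
    fun b => PMF.pure (if b then Equiv.swap z (z + 1) * η else η)

lemma coe_toNNReal_ite (c : Prop) [Decidable c] (q x : ℝ≥0∞) (hq : q ≤ 1) (hx : x ≤ 1) :
    (((if c then x else q * x).toNNReal : NNReal) : ℝ≥0∞) = if c then x else q * x := by
  apply ENNReal.coe_toNNReal
  split_ifs
  · exact ne_top_of_le_ne_top ENNReal.one_ne_top hx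
  · exact ne_top_of_le_ne_top ENNReal.one_ne_top (le_trans (mul_le_mul' hq hx) (by simp))

lemma swapStep_bind_apply (q : ℝ≥0∞) (hq : q ≤ 1) (z : ℤ) (x : ℝ≥0∞) (hx : x ≤ 1)
    (η : Equiv.Perm ℤ) (g : Equiv.Perm ℤ → PMF (Equiv.Perm ℤ)) (π : Equiv.Perm ℤ) :
    ((swapStep q hq z x hx η).bind g) π =
      (1 - (if η z < η (z + 1) then x else q * x)) * g η π
        + (if η z < η (z + 1) then x else q * x) * g (η * Equiv.swap z (z + 1)) π := by
  rw [swapStep, PMF.bind_bind, PMF.bind_apply, tsum_bool]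
  simp [PMF.bernoulli_apply, PMF.pure_bind, coe_toNNReal_ite _ q x hq hx]

lemma swapStepL_bind_apply (q : ℝ≥0∞) (hq : q ≤ 1) (z : ℤ) (x : ℝ≥0∞) (hx : x ≤ 1)
    (η : Equiv.Perm ℤ) (g : Equiv.Perm ℤ → PMF (Equiv.Perm ℤ)) (π : Equiv.Perm ℤ) :
    ((swapStepL q hq z x hx η).bind g) π =
      (1 - (if η⁻¹ z < η⁻¹ (z + 1) then x else q * x)) * g η π
        + (if η⁻¹ z < η⁻¹ (z + 1) then x else q * x) * g (Equiv.swap z (z + 1) * η) π := by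
  rw [swapStepL, PMF.bind_bind, PMF.bind_apply, tsum_bool]
  simp [PMF.bernoulli_apply, PMF.pure_bind, coe_toNNReal_ite _ q x hq hx]

lemma swapStep_apply (q : ℝ≥0∞) (hq : q ≤ 1) (z : ℤ) (x : ℝ≥0∞) (hx : x ≤ 1)
    (η : Equiv.Perm ℤ) (π : Equiv.Perm ℤ) :
    swapStep q hq z x hx η π =
      (1 - (if η z < η (z + 1) then x else q * x)) * (if π = η then 1 else 0)
        + (if η z < η (z + 1) then x else q * x) *
            (if π = η * Equiv.swap z (z + 1) then 1 else 0) := by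
  rw [swapStep, PMF.bind_apply, tsum_bool]
  simp only [PMF.bernoulli_apply, PMF.pure_apply, Bool.cond_false, Bool.cond_true,
    coe_toNNReal_ite _ q x hq hx,
    mul_ite, mul_one, mul_zero, ite_mul, zero_mul]
  split_ifs <;> simp_all [ENNReal.coe_toNNReal (ne_top_of_le_ne_top ENNReal.one_ne_top hx),
    ENNReal.coe_toNNReal (ne_top_of_le_ne_top ENNReal.one_ne_top hq)]

lemma swapStepL_apply (q : ℝ≥0∞) (hq : q ≤ 1) (z : ℤ) (x : ℝ≥0∞) (hx : x ≤ 1)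
    (η : Equiv.Perm ℤ) (π : Equiv.Perm ℤ) :
    swapStepL q hq z x hx η π =
      (1 - (if η⁻¹ z < η⁻¹ (z + 1) then x else q * x)) * (if π = η then 1 else 0)
        + (if η⁻¹ z < η⁻¹ (z + 1) then x else q * x) *
            (if π = Equiv.swap z (z + 1) * η then 1 else 0) := by
  rw [swapStepL, PMF.bind_apply, tsum_bool]
  simp only [PMF.bernoulli_apply, PMF.pure_apply, Bool.cond_false, Bool.cond_true,
    coe_toNNReal_ite _ q x hq hx,
    mul_ite, mul_one, mul_zero, ite_mul, zero_mul]
  split_ifs <;> simp_all [ENNReal.coe_toNNReal (ne_top_of_le_ne_top ENNReal.one_ne_top hx),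
    ENNReal.coe_toNNReal (ne_top_of_le_ne_top ENNReal.one_ne_top hq)]

noncomputable def runSwapsL (q : ℝ≥0∞) (hq : q ≤ 1) :
    List (ℤ × {x : ℝ≥0∞ // x ≤ 1}) → Equiv.Perm ℤ → PMF (Equiv.Perm ℤ)
  | [], η => PMF.pure η
  | (z, x) :: rest, η => (swapStepL q hq z x.1 x.2 η).bind (runSwapsL q hq rest)

/-- The key Hecke-algebra commutation: a right swap step and a left swap step
commute. -/
lemma comm_core (q : ℝ≥0∞) (hq : q ≤ 1) (z : ℤ) (x : ℝ≥0∞) (hx : x ≤ 1)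
    (w : ℤ) (y : ℝ≥0∞) (hy : y ≤ 1) (η : Equiv.Perm ℤ) :
    (swapStep q hq w y hy η).bind (swapStepL q hq z x hx)
      = (swapStepL q hq z x hx η).bind (swapStep q hq w y hy) := by
  ext π
  rw [swapStep_bind_apply, swapStepL_bind_apply,
    swapStepL_apply, swapStepL_apply, swapStep_apply, swapStep_apply]
  by_cases h1 : η w = z ∧ η (w + 1) = z + 1
  · have e1 : η * Equiv.swap w (w + 1) = Equiv.swap z (z + 1) * η := by
      rw [Equiv.mul_swap_eq_swap_mul, h1.1, h1.2]
    have hv1 : η⁻¹ z = w := by rw [← h1.1]; exact η.symm_apply_apply w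
    have hv2 : η⁻¹ (z + 1) = w + 1 := by rw [← h1.2]; exact η.symm_apply_apply (w + 1)
    have c1 : η w < η (w + 1) := by rw [h1.1, h1.2]; omega
    have c2 : η⁻¹ z < η⁻¹ (z + 1) := by rw [hv1, hv2]; omega
    have c3 : ¬((η * Equiv.swap w (w + 1))⁻¹ z < (η * Equiv.swap w (w + 1))⁻¹ (z + 1)) := by
      rw [e1, mul_inv_rev, Equiv.swap_inv, Equiv.Perm.mul_apply, Equiv.Perm.mul_apply,
        Equiv.swap_apply_left, Equiv.swap_apply_right, hv1, hv2]
      omega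
    have c4 : ¬((Equiv.swap z (z + 1) * η) w < (Equiv.swap z (z + 1) * η) (w + 1)) := by
      rw [Equiv.Perm.mul_apply, Equiv.Perm.mul_apply, h1.1, h1.2,
        Equiv.swap_apply_left, Equiv.swap_apply_right]
      omega
    simp only [if_pos c1, if_pos c2, if_neg c3, if_neg c4]
    simp only [mul_assoc, e1, Equiv.swap_mul_self_mul]
    set A := (if π = η then (1 : ℝ≥0∞) else 0) with hA
    set B := (if π = Equiv.swap z (z + 1) * η then (1 : ℝ≥0∞) else 0) with hB
    trans (((1 - y) * (1 - x) + y * (q * x)) * A + (y * (1 - q * x) + (1 - y) * x) * B)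
    · ring
    · rw [show (1 - y) * (1 - x) + y * (q * x) = (1 - x) * (1 - y) + x * (q * y) from by ring,
        key1 q y x hq hy hx]
      ring
  · by_cases h2 : η w = z + 1 ∧ η (w + 1) = z
    · have e1 : η * Equiv.swap w (w + 1) = Equiv.swap z (z + 1) * η := by
        rw [Equiv.mul_swap_eq_swap_mul, h2.1, h2.2, Equiv.swap_comm]
      have hv1 : η⁻¹ z = w + 1 := by rw [← h2.2]; exact η.symm_apply_apply (w + 1)
      have hv2 : η⁻¹ (z + 1) = w := by rw [← h2.1]; exact η.symm_apply_apply w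
      have c1 : ¬(η w < η (w + 1)) := by rw [h2.1, h2.2]; omega
      have c2 : ¬(η⁻¹ z < η⁻¹ (z + 1)) := by rw [hv1, hv2]; omega
      have c3 : (η * Equiv.swap w (w + 1))⁻¹ z < (η * Equiv.swap w (w + 1))⁻¹ (z + 1) := by
        rw [e1, mul_inv_rev, Equiv.swap_inv, Equiv.Perm.mul_apply, Equiv.Perm.mul_apply,
          Equiv.swap_apply_left, Equiv.swap_apply_right, hv1, hv2]
        omega
      have c4 : (Equiv.swap z (z + 1) * η) w < (Equiv.swap z (z + 1) * η) (w + 1) := by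
        rw [Equiv.Perm.mul_apply, Equiv.Perm.mul_apply, h2.1, h2.2,
          Equiv.swap_apply_left, Equiv.swap_apply_right]
        omega
      simp only [if_neg c1, if_neg c2, if_pos c3, if_pos c4]
      simp only [mul_assoc, e1, Equiv.swap_mul_self_mul]
      set A := (if π = η then (1 : ℝ≥0∞) else 0) with hA
      set B := (if π = Equiv.swap z (z + 1) * η then (1 : ℝ≥0∞) else 0) with hB
      trans (((1 - q * y) * (1 - q * x) + q * y * x) * A
        + ((1 - q * y) * (q * x) + q * y * (1 - x)) * B)
      · ring
      · rw [show (1 - q * y) * (q * x) + q * y * (1 - x)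
              = (q * y) * (1 - x) + (1 - q * y) * (q * x) from by ring,
          key2 q y x hq hy hx]
        ring
    · -- non-interacting case
      have hne1 : η⁻¹ z ≠ η⁻¹ (z + 1) := by
        intro h; exact absurd (η⁻¹.injective h) (by omega)
      have hne2 : η w ≠ η (w + 1) := by
        intro h; exact absurd (η.injective h) (by omega)
      have hcL : ((η * Equiv.swap w (w + 1))⁻¹ z < (η * Equiv.swap w (w + 1))⁻¹ (z + 1))
          ↔ (η⁻¹ z < η⁻¹ (z + 1)) := by
        rw [mul_inv_rev, Equiv.swap_inv, Equiv.Perm.mul_apply, Equiv.Perm.mul_apply]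
        apply swap_lt_swap_iff w _ _ hne1
        · rintro ⟨p1, p2⟩
          exact h1 ⟨by rw [← p1]; exact η.apply_symm_apply _,
            by rw [← p2]; exact η.apply_symm_apply _⟩
        · rintro ⟨p1, p2⟩
          exact h2 ⟨by rw [← p2]; exact η.apply_symm_apply _,
            by rw [← p1]; exact η.apply_symm_apply _⟩
      have hcR : ((Equiv.swap z (z + 1) * η) w < (Equiv.swap z (z + 1) * η) (w + 1))
          ↔ (η w < η (w + 1)) := by
        rw [Equiv.Perm.mul_apply, Equiv.Perm.mul_apply]
        exact swap_lt_swap_iff z _ _ hne2 h1 h2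
      simp only [hcL, hcR, mul_assoc]
      ring

lemma commL (q : ℝ≥0∞) (hq : q ≤ 1) (z : ℤ) (x : ℝ≥0∞) (hx : x ≤ 1)
    (ops : List (ℤ × {x : ℝ≥0∞ // x ≤ 1})) :
    ∀ η, (swapStepL q hq z x hx η).bind (runSwaps q hq ops)
      = (runSwaps q hq ops η).bind (swapStepL q hq z x hx) := by
  induction ops with
  | nil => intro η; simp [runSwaps, PMF.bind_pure, PMF.pure_bind]
  | cons o rest ih =>
    intro η
    obtain ⟨w, y⟩ := o
    simp only [runSwaps]
    rw [← PMF.bind_bind, ← comm_core q hq z x hx w y.1 y.2 η, PMF.bind_bind, PMF.bind_bind]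
    exact congrArg _ (funext ih)

lemma runSwapsL_append (q : ℝ≥0∞) (hq : q ≤ 1) (o : ℤ × {x : ℝ≥0∞ // x ≤ 1})
    (l : List (ℤ × {x : ℝ≥0∞ // x ≤ 1})) :
    ∀ η, runSwapsL q hq (l ++ [o]) η
      = (runSwapsL q hq l η).bind (swapStepL q hq o.1 o.2.1 o.2.2) := by
  induction l with
  | nil =>
    intro η
    obtain ⟨w, y⟩ := o
    simp [runSwapsL, PMF.pure_bind, PMF.bind_pure]
  | cons a rest ih =>
    intro η
    obtain ⟨w, y⟩ := a
    simp only [List.cons_append, runSwapsL, PMF.bind_bind]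
    exact congrArg _ (funext ih)

lemma swapStep_map_inv (q : ℝ≥0∞) (hq : q ≤ 1) (z : ℤ) (x : ℝ≥0∞) (hx : x ≤ 1)
    (η : Equiv.Perm ℤ) :
    (swapStep q hq z x hx η).map (fun π => π⁻¹) = swapStepL q hq z x hx η⁻¹ := by
  rw [swapStep, swapStepL, PMF.map_bind]
  simp only [inv_inv]
  exact congrArg _ (funext fun b => by
    cases b <;> simp [PMF.pure_map, mul_inv_rev, Equiv.swap_inv])

lemma runSwaps_map_inv (q : ℝ≥0∞) (hq : q ≤ 1)
    (ops : List (ℤ × {x : ℝ≥0∞ // x ≤ 1})) :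
    ∀ η, (runSwaps q hq ops η).map (fun π => π⁻¹) = runSwapsL q hq ops η⁻¹ := by
  induction ops with
  | nil => intro η; simp [runSwaps, runSwapsL, PMF.pure_map]
  | cons o rest ih =>
    intro η
    obtain ⟨w, y⟩ := o
    simp only [runSwaps, runSwapsL, PMF.map_bind]
    rw [← swapStep_map_inv q hq w y.1 y.2 η, PMF.bind_map]
    exact congrArg _ (funext ih)

lemma swapStep_one (q : ℝ≥0∞) (hq : q ≤ 1) (z : ℤ) (x : ℝ≥0∞) (hx : x ≤ 1) :
    swapStep q hq z x hx 1 = swapStepL q hq z x hx 1 := by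
  rw [swapStep, swapStepL]
  simp [one_mul, mul_one, inv_one]

lemma main' (q : ℝ≥0∞) (hq : q ≤ 1) (ops : List (ℤ × {x : ℝ≥0∞ // x ≤ 1})) :
    runSwaps q hq ops 1 = runSwapsL q hq ops.reverse 1 := by
  induction ops with
  | nil => simp [runSwaps, runSwapsL]
  | cons o rest ih =>
    obtain ⟨w, y⟩ := o
    simp only [runSwaps, List.reverse_cons]
    rw [swapStep_one, commL, ih, runSwapsL_append]


/-- Color-position symmetry for the discrete-time multi-colored system:
the random bijection `H_k` obtained from the packed (identity) initial
configuration by applying the swaps in order has the same law as the inverse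
of the random bijection `H̃_k` obtained by applying the same swaps in the
opposite order. -/
theorem statement5 (q : ℝ≥0∞) (hq : q ≤ 1)
    (ops : List (ℤ × {x : ℝ≥0∞ // x ≤ 1})) :
    runSwaps q hq ops 1
      = (runSwaps q hq ops.reverse 1).map (fun π => π⁻¹) := by
  rw [runSwaps_map_inv q hq ops.reverse 1, inv_one, main' q hq ops]
end
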